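/- Let D be a finite nonempty set of positive integers, p a prime, and n a positive integer. Suppose (u_d)_{d∈D} are nonnegative integers (not necessarily bounded by p^n − 1) with Σ_{d∈D} u_d·d ≡ 0 (mod p^n − 1) and Σ_{d∈D} u_d·d > 0. Then Σ_{d∈D} s_p(u_d) ≥ s_{D,p}(n), where s_{D,p}(n) is the minimum of Σ_{d∈D} s_p(v_d) over all tuples (v_d)_{d∈D} with 0 ≤ v_d ≤ p^n − 1, Σ v_d·d ≡ 0 (mod p^n − 1) and Σ v_d·d > 0. -/

import Mathlib

/-- `sp p n` is the sum of the base-`p` digits of `n`. -/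
def sp (p n : ℕ) : ℕ := (Nat.digits p n).sum

/-- `sD p n D` is `s_{D,p}(n)`: the minimum of `∑_{d∈D} s_p(u_d)` over tuples
`(u_d)_{d∈D}` with `0 ≤ u_d ≤ p^n − 1`, `∑ u_d·d ≡ 0 (mod p^n − 1)` and `∑ u_d·d > 0`. -/
noncomputable def sD (p n : ℕ) (D : Finset ℕ) : ℕ :=
  sInf {s : ℕ | ∃ u : ℕ → ℕ, (∀ d ∈ D, u d ≤ p ^ n - 1) ∧
    (p ^ n - 1) ∣ (∑ d ∈ D, u d * d) ∧ 0 < ∑ d ∈ D, u d * d ∧ s = ∑ d ∈ D, sp p (u d)}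

/-!
Subadditivity of the base-`p` digit sum shows that replacing `m ≥ p ^ n` by
`m / p ^ n + m % p ^ n` does not increase `s_p(m)`; since `p ^ n ≡ 1 (mod p ^ n − 1)`, it also
preserves `m` modulo `p ^ n − 1`, and it keeps `m` positive. Iterating this folding brings every
`u_d` into `[0, p ^ n − 1]` and yields an admissible tuple for `s_{D,p}(n)` whose digit sum is at
most `∑ s_p(u_d)`.
-/

open Finset

theorem sub_one_mul_sum_div_pow_eq_sub_sp {p N m : ℕ} (hp : 1 < p) (hm : m < p ^ N) :
    (p - 1) * ∑ i ∈ range N, m / p ^ (i + 1) = m - sp p m := by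
  rcases eq_or_ne m 0 with rfl | hm0
  · simp [sp]
  have hlog : (Nat.log p m).succ ≤ N := Nat.log_lt_of_lt_pow hm0 hm
  rw [sp, ← Nat.sub_one_mul_sum_log_div_pow_eq_sub_sum_digits, ← sum_range_add_sum_Ico _ hlog,
    sum_eq_zero (s := Ico _ _), add_zero]
  intro i hi
  apply Nat.div_eq_of_lt
  calc m < p ^ (Nat.log p m).succ := Nat.lt_pow_succ_log_self hp m
    _ ≤ p ^ (i + 1) := Nat.pow_le_pow_right (by omega) (by simp at hi; omega)

theorem sp_le_self (p m : ℕ) : sp p m ≤ m := Nat.digit_sum_le p m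

-- By Legendre's formula `m - s_p(m)` is `p - 1` times a sum of floors `⌊m / p^i⌋`, and floors are
-- superadditive.
theorem sp_add_le {p : ℕ} (hp : 1 < p) (a b : ℕ) : sp p (a + b) ≤ sp p a + sp p b := by
  have hab : a + b < p ^ (a + b) := Nat.lt_pow_self hp
  have hfloor : ∑ i ∈ range (a + b), (a / p ^ (i + 1) + b / p ^ (i + 1)) ≤
      ∑ i ∈ range (a + b), (a + b) / p ^ (i + 1) :=
    sum_le_sum fun i _ => Nat.div_add_div_le_add_div
  rw [sum_add_distrib] at hfloor
  have hlegendre := Nat.mul_le_mul_left (p - 1) hfloor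
  rw [mul_add, sub_one_mul_sum_div_pow_eq_sub_sp hp (m := a) (by omega),
    sub_one_mul_sum_div_pow_eq_sub_sp hp (m := b) (by omega),
    sub_one_mul_sum_div_pow_eq_sub_sp hp hab] at hlegendre
  have ha := sp_le_self p a
  have hb := sp_le_self p b
  have hab' := sp_le_self p (a + b)
  omega

theorem sp_add_pow_mul {p k r q : ℕ} (hp : 1 < p) (hr : r < p ^ k) :
    sp p (r + p ^ k * q) = sp p r + sp p q := by
  rcases eq_or_ne q 0 with rfl | hq
  · simp [sp]
  obtain ⟨j, hj⟩ := Nat.exists_eq_add_of_le ((Nat.digits_length_le_iff hp r).2 hr)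
  rw [sp, hj, ← Nat.digits_append_zeroes_append_digits hp (Nat.pos_of_ne_zero hq)]
  simp [sp]

theorem exists_lt_pow_modEq_sp_le {p n : ℕ} (hp : 1 < p) (hn : 0 < n) (m : ℕ) :
    ∃ m', (0 < m → 0 < m') ∧ m' < p ^ n ∧ m' ≡ m [MOD p ^ n - 1] ∧ sp p m' ≤ sp p m := by
  induction m using Nat.strong_induction_on with
  | _ m ih =>
  rcases lt_or_ge m (p ^ n) with hm | hm
  · exact ⟨m, id, hm, rfl, le_rfl⟩
  have hpn : 1 < p ^ n := Nat.one_lt_pow hn.ne' hp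
  set q := m / p ^ n
  set r := m % p ^ n
  have hm_eq : r + p ^ n * q = m := Nat.mod_add_div m (p ^ n)
  have hq : 0 < q := Nat.div_pos hm (by omega)
  have hr : r < p ^ n := Nat.mod_lt m (by omega)
  have hlt : q + r < m := by nlinarith
  obtain ⟨m', hpos', hlt', hmod', hsp'⟩ := ih (q + r) hlt
  refine ⟨m', fun _ => hpos' (Nat.add_pos_left hq r), hlt', ?_, ?_⟩
  · have hpow : p ^ n ≡ 1 [MOD p ^ n - 1] := Nat.modEq_sub hpn.le
    calc m' ≡ q + r [MOD p ^ n - 1] := hmod'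
      _ = r + 1 * q := by ring
      _ ≡ r + p ^ n * q [MOD p ^ n - 1] := (hpow.symm.mul_right q).add_left r
      _ = m := hm_eq
  · calc sp p m' ≤ sp p (q + r) := hsp'
      _ ≤ sp p q + sp p r := sp_add_le hp q r
      _ = sp p m := by rw [← hm_eq, sp_add_pow_mul hp hr, add_comm]

theorem stmt_6_general (p : ℕ) (hp : p.Prime) (n : ℕ) (hn : 0 < n)
    (D : Finset ℕ) (u : ℕ → ℕ)
    (hdvd : (p ^ n - 1) ∣ (∑ d ∈ D, u d * d)) (hpos : 0 < ∑ d ∈ D, u d * d) :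
    sD p n D ≤ ∑ d ∈ D, sp p (u d) := by
  choose f hf_pos hf_lt hf_modEq hf_sp using exists_lt_pow_modEq_sp_le hp.one_lt hn
  have hsum_modEq : ∑ d ∈ D, f (u d) * d ≡ ∑ d ∈ D, u d * d [MOD p ^ n - 1] :=
    Nat.ModEq.sum fun d _ => (hf_modEq (u d)).mul_right d
  have hsum_pos : 0 < ∑ d ∈ D, f (u d) * d := by
    obtain ⟨d, hd, hud⟩ := sum_pos_iff.1 hpos
    exact sum_pos_iff.2 ⟨d, hd, Nat.mul_pos (hf_pos _ (Nat.pos_of_mul_pos_right hud))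
      (Nat.pos_of_mul_pos_left hud)⟩
  calc sD p n D ≤ ∑ d ∈ D, sp p (f (u d)) :=
        Nat.sInf_le ⟨fun d => f (u d), fun d _ => Nat.le_sub_one_of_lt (hf_lt (u d)),
          Nat.modEq_zero_iff_dvd.1 (hsum_modEq.trans (Nat.modEq_zero_iff_dvd.2 hdvd)),
          hsum_pos, rfl⟩
    _ ≤ ∑ d ∈ D, sp p (u d) := sum_le_sum fun d _ => hf_sp (u d)

theorem stmt_6 (p : ℕ) (hp : p.Prime) (n : ℕ) (hn : 0 < n)
    (D : Finset ℕ) (hD : D.Nonempty) (hDpos : ∀ d ∈ D, 0 < d)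
    (u : ℕ → ℕ) (hdvd : (p ^ n - 1) ∣ (∑ d ∈ D, u d * d)) (hpos : 0 < ∑ d ∈ D, u d * d) :
    sD p n D ≤ ∑ d ∈ D, sp p (u d) :=
  stmt_6_general p hp n hn D u hdvd hpos
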